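/- Subword monotonicity of parallel-rewriting distance: define strings over the alphabet {▽, △, ◁, ▷} and the replacement rules ◁△→◁, ◁▽→◁, △▷→▷, ▽▷→▷, △△→△, ▽▽→▽, ▽△→△▽, △▽→▽△, ◁▷→ε, where a single rewriting step applies any set of these replacements simultaneously to disjoint substrings. Let b(s) be the minimum number of rewriting steps needed to reduce s to the empty string. If s is obtained from s' by deleting some ▽ and △ symbols (preserving the order of remaining symbols), then b(s) ≤ b(s'). -/
import Mathlib


/-- The alphabet: `D` = ▽, `U` = △, `L` = ◁, `R` = ▷. -/
inductive RSym : Type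
  | D | U | L | R
deriving DecidableEq

/-- The (length-nonincreasing) replacement rules. -/
inductive Rule : List RSym → List RSym → Prop
  | LU : Rule [.L, .U] [.L]
  | LD : Rule [.L, .D] [.L]
  | UR : Rule [.U, .R] [.R]
  | DR : Rule [.D, .R] [.R]
  | UU : Rule [.U, .U] [.U]
  | DD : Rule [.D, .D] [.D]
  | DU : Rule [.D, .U] [.U, .D]
  | UD : Rule [.U, .D] [.D, .U]
  | LR : Rule [.L, .R] []

/-- A parallel rewriting step: simultaneously apply replacements whose
left-hand sides occupy pairwise disjoint substrings. -/
inductive Step : List RSym → List RSym → Prop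
  | nil : Step [] []
  | copy (a : RSym) {s t : List RSym} : Step s t → Step (a :: s) (a :: t)
  | rule {l r s t : List RSym} : Rule l r → Step s t → Step (l ++ s) (r ++ t)

/-- `StepN n s t`: `t` is reachable from `s` in `n` parallel rewriting steps. -/
inductive StepN : ℕ → List RSym → List RSym → Prop
  | refl (s : List RSym) : StepN 0 s s
  | step {n : ℕ} {s u t : List RSym} : Step s u → StepN n u t → StepN (n + 1) s t

/-- `Subword s t`: `s` is obtained from `t` by deleting some ▽ and △
symbols, keeping the order of the remaining symbols. -/
inductive Subword : List RSym → List RSym → Prop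
  | nil : Subword [] []
  | keep (a : RSym) {s t : List RSym} : Subword s t → Subword (a :: s) (a :: t)
  | del (a : RSym) {s t : List RSym} : (a = .D ∨ a = .U) → Subword s t →
      Subword s (a :: t)

theorem step_refl : ∀ s : List RSym, Step s s
  | [] => Step.nil
  | a :: s => Step.copy a (step_refl s)

lemma key : ∀ {s' t' : List RSym}, Step s' t' → ∀ {s}, Subword s s' →
    ∃ t, Step s t ∧ Subword t t' := by
  intro s' t' h
  induction h with
  | nil =>
    intro s hs; cases hs; exact ⟨[], Step.nil, Subword.nil⟩
  | copy a h ih =>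
    intro s hs
    cases hs with
    | keep _ hs =>
      obtain ⟨t, ht, hsub⟩ := ih hs
      exact ⟨a :: t, Step.copy a ht, Subword.keep a hsub⟩
    | del _ hd hs =>
      obtain ⟨t, ht, hsub⟩ := ih hs
      exact ⟨t, ht, Subword.del a hd hsub⟩
  | rule hr h ih =>
    intro s hs
    cases hr with
    | LU =>
      cases hs with
      | keep _ hs1 =>
        cases hs1 with
        | keep _ hs2 =>
          obtain ⟨t, ht, hsub⟩ := ih hs2
          exact ⟨.L :: t, Step.rule Rule.LU ht, Subword.keep _ hsub⟩
        | del _ hd hs2 =>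
          obtain ⟨t, ht, hsub⟩ := ih hs2
          exact ⟨.L :: t, Step.copy _ ht, Subword.keep _ hsub⟩
      | del _ hd _ => rcases hd with h | h <;> cases h
    | LD =>
      cases hs with
      | keep _ hs1 =>
        cases hs1 with
        | keep _ hs2 =>
          obtain ⟨t, ht, hsub⟩ := ih hs2
          exact ⟨.L :: t, Step.rule Rule.LD ht, Subword.keep _ hsub⟩
        | del _ hd hs2 =>
          obtain ⟨t, ht, hsub⟩ := ih hs2
          exact ⟨.L :: t, Step.copy _ ht, Subword.keep _ hsub⟩
      | del _ hd _ => rcases hd with h | h <;> cases h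
    | UR =>
      cases hs with
      | keep _ hs1 =>
        cases hs1 with
        | keep _ hs2 =>
          obtain ⟨t, ht, hsub⟩ := ih hs2
          exact ⟨.R :: t, Step.rule Rule.UR ht, Subword.keep _ hsub⟩
        | del _ hd _ => rcases hd with h | h <;> cases h
      | del _ hd hs1 =>
        cases hs1 with
        | keep _ hs2 =>
          obtain ⟨t, ht, hsub⟩ := ih hs2
          exact ⟨.R :: t, Step.copy _ ht, Subword.keep _ hsub⟩
        | del _ hd2 _ => rcases hd2 with h | h <;> cases h
    | DR =>
      cases hs with
      | keep _ hs1 =>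
        cases hs1 with
        | keep _ hs2 =>
          obtain ⟨t, ht, hsub⟩ := ih hs2
          exact ⟨.R :: t, Step.rule Rule.DR ht, Subword.keep _ hsub⟩
        | del _ hd _ => rcases hd with h | h <;> cases h
      | del _ hd hs1 =>
        cases hs1 with
        | keep _ hs2 =>
          obtain ⟨t, ht, hsub⟩ := ih hs2
          exact ⟨.R :: t, Step.copy _ ht, Subword.keep _ hsub⟩
        | del _ hd2 _ => rcases hd2 with h | h <;> cases h
    | UU =>
      cases hs with
      | keep _ hs1 =>
        cases hs1 with
        | keep _ hs2 =>
          obtain ⟨t, ht, hsub⟩ := ih hs2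
          exact ⟨.U :: t, Step.rule Rule.UU ht, Subword.keep _ hsub⟩
        | del _ hd hs2 =>
          obtain ⟨t, ht, hsub⟩ := ih hs2
          exact ⟨.U :: t, Step.copy _ ht, Subword.keep _ hsub⟩
      | del _ hd hs1 =>
        cases hs1 with
        | keep _ hs2 =>
          obtain ⟨t, ht, hsub⟩ := ih hs2
          exact ⟨.U :: t, Step.copy _ ht, Subword.keep _ hsub⟩
        | del _ hd2 hs2 =>
          obtain ⟨t, ht, hsub⟩ := ih hs2
          exact ⟨t, ht, Subword.del .U (Or.inr rfl) hsub⟩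
    | DD =>
      cases hs with
      | keep _ hs1 =>
        cases hs1 with
        | keep _ hs2 =>
          obtain ⟨t, ht, hsub⟩ := ih hs2
          exact ⟨.D :: t, Step.rule Rule.DD ht, Subword.keep _ hsub⟩
        | del _ hd hs2 =>
          obtain ⟨t, ht, hsub⟩ := ih hs2
          exact ⟨.D :: t, Step.copy _ ht, Subword.keep _ hsub⟩
      | del _ hd hs1 =>
        cases hs1 with
        | keep _ hs2 =>
          obtain ⟨t, ht, hsub⟩ := ih hs2
          exact ⟨.D :: t, Step.copy _ ht, Subword.keep _ hsub⟩
        | del _ hd2 hs2 =>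
          obtain ⟨t, ht, hsub⟩ := ih hs2
          exact ⟨t, ht, Subword.del .D (Or.inl rfl) hsub⟩
    | DU =>
      cases hs with
      | keep _ hs1 =>
        cases hs1 with
        | keep _ hs2 =>
          obtain ⟨t, ht, hsub⟩ := ih hs2
          exact ⟨.U :: .D :: t, Step.rule Rule.DU ht,
            Subword.keep _ (Subword.keep _ hsub)⟩
        | del _ hd hs2 =>
          obtain ⟨t, ht, hsub⟩ := ih hs2
          exact ⟨.D :: t, Step.copy _ ht,
            Subword.del .U (Or.inr rfl) (Subword.keep _ hsub)⟩
      | del _ hd hs1 =>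
        cases hs1 with
        | keep _ hs2 =>
          obtain ⟨t, ht, hsub⟩ := ih hs2
          exact ⟨.U :: t, Step.copy _ ht,
            Subword.keep _ (Subword.del .D (Or.inl rfl) hsub)⟩
        | del _ hd2 hs2 =>
          obtain ⟨t, ht, hsub⟩ := ih hs2
          exact ⟨t, ht, Subword.del .U (Or.inr rfl)
            (Subword.del .D (Or.inl rfl) hsub)⟩
    | UD =>
      cases hs with
      | keep _ hs1 =>
        cases hs1 with
        | keep _ hs2 =>
          obtain ⟨t, ht, hsub⟩ := ih hs2
          exact ⟨.D :: .U :: t, Step.rule Rule.UD ht,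
            Subword.keep _ (Subword.keep _ hsub)⟩
        | del _ hd hs2 =>
          obtain ⟨t, ht, hsub⟩ := ih hs2
          exact ⟨.U :: t, Step.copy _ ht,
            Subword.del .D (Or.inl rfl) (Subword.keep _ hsub)⟩
      | del _ hd hs1 =>
        cases hs1 with
        | keep _ hs2 =>
          obtain ⟨t, ht, hsub⟩ := ih hs2
          exact ⟨.D :: t, Step.copy _ ht,
            Subword.keep _ (Subword.del .U (Or.inr rfl) hsub)⟩
        | del _ hd2 hs2 =>
          obtain ⟨t, ht, hsub⟩ := ih hs2
          exact ⟨t, ht, Subword.del .D (Or.inl rfl)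
            (Subword.del .U (Or.inr rfl) hsub)⟩
    | LR =>
      cases hs with
      | keep _ hs1 =>
        cases hs1 with
        | keep _ hs2 =>
          obtain ⟨t, ht, hsub⟩ := ih hs2
          exact ⟨t, Step.rule Rule.LR ht, hsub⟩
        | del _ hd _ => rcases hd with h | h <;> cases h
      | del _ hd _ => rcases hd with h | h <;> cases h

/-- Subword monotonicity of the parallel-rewriting distance `b`: if `s` is a
subword of `s'` and `s'` can reach the empty string in `n` parallel steps,
then `s` can reach the empty string in at most `n` parallel steps;
hence `b s ≤ b s'`. -/
theorem subword_rewriting_distance_mono (s s' : List RSym)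
    (hsub : Subword s s') :
    ∀ n : ℕ, StepN n s' [] → ∃ m ≤ n, StepN m s [] := by
  intro n h
  induction n generalizing s s' with
  | zero =>
    cases h; cases hsub
    exact ⟨0, le_refl 0, StepN.refl []⟩
  | succ n ih =>
    cases h with
    | step h1 h2 =>
      obtain ⟨t, ht, hsub'⟩ := key h1 hsub
      obtain ⟨m, hm, hsn⟩ := ih t _ hsub' h2
      exact ⟨m + 1, Nat.succ_le_succ hm, StepN.step ht hsn⟩
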